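/- If ‖B_J‖_∞ < 1 (strict diagonal dominance by rows), then for every splitting (B₁,...,B_d) of B_J the iteration matrix satisfies ρ(𝓑_{(d)}) < 1, i.e., the splitting method converges. -/

import Mathlib

open Matrix

/-- A splitting of `B`: nonzero parts summing to `B` with pairwise vanishing
Hadamard products. -/
def IsSplitting {n d : ℕ} (B : Matrix (Fin n) (Fin n) ℝ)
    (Bs : Fin d → Matrix (Fin n) (Fin n) ℝ) : Prop :=
  (∀ p, Bs p ≠ 0) ∧ (∑ p, Bs p = B) ∧
    ∀ p q, p ≠ q → Matrix.hadamard (Bs p) (Bs q) = 0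

/-- Strictly block-lower-triangular part `𝓛` of the splitting scheme. -/
def blockL {n d : ℕ} (Bs : Fin d → Matrix (Fin n) (Fin n) ℝ) :
    Matrix (Fin d × Fin n) (Fin d × Fin n) ℝ :=
  Matrix.of fun pi qj => if qj.1 < pi.1 then Bs qj.1 pi.2 qj.2 else 0

/-- Block-upper-triangular part `𝓤` of the splitting scheme. -/
def blockU {n d : ℕ} (Bs : Fin d → Matrix (Fin n) (Fin n) ℝ) :
    Matrix (Fin d × Fin n) (Fin d × Fin n) ℝ :=
  Matrix.of fun pi qj => if pi.1 ≤ qj.1 then Bs qj.1 pi.2 qj.2 else 0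

/-- The iteration matrix `𝓑 = (𝓘 - 𝓛)⁻¹ 𝓤` of a splitting. -/
noncomputable def iterMat {n d : ℕ} (Bs : Fin d → Matrix (Fin n) (Fin n) ℝ) :
    Matrix (Fin d × Fin n) (Fin d × Fin n) ℝ :=
  (1 - blockL Bs)⁻¹ * blockU Bs

/-- Complexification of the iteration matrix. -/
noncomputable def iterMatC {n d : ℕ} (Bs : Fin d → Matrix (Fin n) (Fin n) ℝ) :
    Matrix (Fin d × Fin n) (Fin d × Fin n) ℂ :=
  (iterMat Bs).map Complex.ofReal

/-- Spectral radius of a real matrix, via its complexification. -/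
noncomputable def specRad {m : Type*} [Fintype m] [DecidableEq m]
    (M : Matrix m m ℝ) : ENNReal :=
  spectralRadius ℂ (M.map Complex.ofReal)

/-- The maximum absolute row sum norm `‖·‖_∞` of a matrix. -/
noncomputable def infNorm {m k : Type*} [Fintype k] (M : Matrix m k ℝ) : ℝ :=
  ⨆ i, ∑ j, |M i j|

/-!
Because the parts of a splitting have pairwise disjoint supports, the row sums of the parts add
up to those of `B_J`: `∑_{q,j} |(B_q)_{ij}| = ∑_j |(B_J)_{ij}| < 1`. As `𝓛` is strictly block
lower triangular, `det (𝓘 - 𝓛) = 1`, and `μ` is an eigenvalue of `𝓑_{(d)}` iff the pencil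
`μ (𝓘 - 𝓛) - 𝓤` is singular. For `|μ| ≥ 1` the off-diagonal entries of row `(p, i)` of the
pencil are bounded by `|μ| |(B_q)_{ij}|`, so it is strictly diagonally dominant, hence
nonsingular. Thus the finitely many eigenvalues lie in the open unit disc.
-/

open scoped ENNReal

theorem Finset.sum_abs_eq_abs_sum_of_pairwise_mul_eq_zero {ι α : Type*} [Ring α] [LinearOrder α]
    [IsStrictOrderedRing α] (s : Finset ι) (a : ι → α)
    (h : ∀ p ∈ s, ∀ q ∈ s, p ≠ q → a p * a q = 0) :
    ∑ p ∈ s, |a p| = |∑ p ∈ s, a p| := by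
  by_cases hne : ∃ p ∈ s, a p ≠ 0
  · obtain ⟨p, hp, hap⟩ := hne
    have hzero : ∀ q ∈ s, q ≠ p → a q = 0 := fun q hq hqp =>
      (mul_eq_zero.mp (h p hp q hq hqp.symm)).resolve_left hap
    rw [Finset.sum_eq_single_of_mem p hp fun q hq hqp => by rw [hzero q hq hqp, abs_zero],
      Finset.sum_eq_single_of_mem p hp fun q hq hqp => hzero q hq hqp]
  · push Not at hne
    have habs : ∀ p ∈ s, |a p| = 0 := fun p hp => by rw [hne p hp, abs_zero]
    rw [Finset.sum_eq_zero habs, Finset.sum_eq_zero hne, abs_zero]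

theorem IsSplitting.sum_abs_apply {n d : ℕ} {B : Matrix (Fin n) (Fin n) ℝ}
    {Bs : Fin d → Matrix (Fin n) (Fin n) ℝ} (h : IsSplitting B Bs) (i j : Fin n) :
    ∑ p, |Bs p i j| = |B i j| := by
  obtain ⟨-, hsum, hhad⟩ := h
  rw [← hsum, Matrix.sum_apply]
  refine Finset.sum_abs_eq_abs_sum_of_pairwise_mul_eq_zero _ _ fun p _ q _ hpq => ?_
  simpa using congr_fun₂ (hhad p q hpq) i j

theorem IsSplitting.sum_abs_row {n d : ℕ} {B : Matrix (Fin n) (Fin n) ℝ}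
    {Bs : Fin d → Matrix (Fin n) (Fin n) ℝ} (h : IsSplitting B Bs) (i : Fin n) :
    ∑ qj : Fin d × Fin n, |Bs qj.1 i qj.2| = ∑ j, |B i j| := by
  rw [Fintype.sum_prod_type, Finset.sum_comm]
  exact Finset.sum_congr rfl fun j _ => h.sum_abs_apply i j

theorem sum_abs_le_infNorm {m k : Type*} [Finite m] [Fintype k] (M : Matrix m k ℝ) (i : m) :
    ∑ j, |M i j| ≤ infNorm M :=
  le_ciSup (f := fun i => ∑ j, |M i j|) (Finite.bddAbove_range _) i

theorem Matrix.map_nonsing_inv {m K L : Type*} [Fintype m] [DecidableEq m] [Field K] [Field L]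
    (f : K →+* L) (A : Matrix m m K) : A⁻¹.map f = (A.map f)⁻¹ := by
  have hdet : (A.map f).det = f A.det := (f.map_det A).symm
  have hadj : (A.map f).adjugate = A.adjugate.map f := (f.map_adjugate A).symm
  ext i j
  simp [Matrix.inv_def, hdet, hadj, Ring.inverse_eq_inv', map_inv₀]

theorem Matrix.mem_spectrum_nonsing_inv_mul_iff {m K : Type*} [Fintype m] [DecidableEq m]
    [Field K] {A B : Matrix m m K} (hA : IsUnit A.det) (μ : K) :
    μ ∈ spectrum K (A⁻¹ * B) ↔ (μ • A - B).det = 0 := by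
  have hfactor : algebraMap K (Matrix m m K) μ - A⁻¹ * B = A⁻¹ * (μ • A - B) := by
    rw [Matrix.mul_sub, Matrix.mul_smul, Matrix.nonsing_inv_mul _ hA,
      Algebra.algebraMap_eq_smul_one]
  rw [spectrum.mem_iff, hfactor, Matrix.isUnit_iff_isUnit_det, Matrix.det_mul,
    IsUnit.mul_iff, isUnit_iff_ne_zero, isUnit_iff_ne_zero, not_and_or, not_not, not_not,
    or_iff_right (Matrix.isUnit_nonsing_inv_det A hA).ne_zero]

theorem spectralRadius_lt_of_finite {𝕜 A : Type*} [NormedField 𝕜] [Ring A] [Algebra 𝕜 A] {a : A}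
    (hfin : (spectrum 𝕜 a).Finite) {r : ℝ≥0∞} (hr : 0 < r)
    (h : ∀ k ∈ spectrum 𝕜 a, (‖k‖₊ : ℝ≥0∞) < r) : spectralRadius 𝕜 a < r := by
  have : spectralRadius 𝕜 a = hfin.toFinset.sup fun k => (‖k‖₊ : ℝ≥0∞) := by
    simp [spectralRadius, Finset.sup_eq_iSup]
  rw [this, Finset.sup_lt_iff hr]
  simpa using h

section Splitting

variable {n d : ℕ} (Bs : Fin d → Matrix (Fin n) (Fin n) ℝ)

theorem blockTriangular_one_sub_blockL :
    (1 - blockL Bs).BlockTriangular fun pi => OrderDual.toDual pi.1 := by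
  rintro ⟨p, i⟩ ⟨q, j⟩ (hpq : p < q)
  have hne : ((p, i) : Fin d × Fin n) ≠ (q, j) := by simp [hpq.ne]
  simp [blockL, Matrix.one_apply_ne hne, hpq.not_gt]

theorem det_one_sub_blockL : (1 - blockL Bs).det = 1 := by
  rw [(blockTriangular_one_sub_blockL Bs).det]
  refine Finset.prod_eq_one fun p _ => ?_
  have hblock : (1 - blockL Bs).toSquareBlock (fun pi => OrderDual.toDual pi.1) p = 1 := by
    ext ⟨⟨q, i⟩, hq⟩ ⟨⟨r, j⟩, hr⟩
    obtain rfl : q = r := OrderDual.toDual.injective (hq.trans hr.symm)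
    simp [Matrix.toSquareBlock_def, blockL, Matrix.one_apply]
  rw [hblock, Matrix.det_one]

noncomputable def splittingPencil (μ : ℂ) : Matrix (Fin d × Fin n) (Fin d × Fin n) ℂ :=
  μ • (1 - blockL Bs).map Complex.ofReal - (blockU Bs).map Complex.ofReal

theorem splittingPencil_apply (μ : ℂ) (pi qj : Fin d × Fin n) :
    splittingPencil Bs μ pi qj =
      μ * (1 : Matrix (Fin d × Fin n) (Fin d × Fin n) ℂ) pi qj -
        (if qj.1 < pi.1 then μ else 1) * Bs qj.1 pi.2 qj.2 := by
  simp only [splittingPencil, blockL, blockU, Matrix.sub_apply, Matrix.smul_apply,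
    Matrix.map_apply, Matrix.of_apply, Matrix.one_apply, smul_eq_mul]
  split_ifs <;> first | omega | simp_all

theorem det_splittingPencil_ne_zero (hrow : ∀ i, ∑ qj : Fin d × Fin n, |Bs qj.1 i qj.2| < 1)
    {μ : ℂ} (hμ : 1 ≤ ‖μ‖) : (splittingPencil Bs μ).det ≠ 0 := by
  refine det_ne_zero_of_sum_row_lt_diag fun ⟨p, i⟩ => ?_
  have hdiag : splittingPencil Bs μ (p, i) (p, i) = μ - Bs p i i := by
    simp [splittingPencil_apply]
  have hoff : ∀ qj ∈ Finset.univ.erase (p, i),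
      ‖splittingPencil Bs μ (p, i) qj‖ ≤ ‖μ‖ * |Bs qj.1 i qj.2| := by
    rintro ⟨q, j⟩ hqj
    rw [splittingPencil_apply, Matrix.one_apply_ne' (Finset.ne_of_mem_erase hqj), mul_zero,
      zero_sub, norm_neg, norm_mul, Complex.norm_real, Real.norm_eq_abs]
    gcongr
    split_ifs <;> simp [hμ]
  calc ∑ qj ∈ Finset.univ.erase (p, i), ‖splittingPencil Bs μ (p, i) qj‖
      ≤ ∑ qj ∈ Finset.univ.erase (p, i), ‖μ‖ * |Bs qj.1 i qj.2| := Finset.sum_le_sum hoff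
    _ = ‖μ‖ * (∑ qj : Fin d × Fin n, |Bs qj.1 i qj.2| - |Bs p i i|) := by
      rw [← Finset.mul_sum, Finset.sum_erase_eq_sub (Finset.mem_univ _)]
    _ < ‖μ‖ - |Bs p i i| := by nlinarith [hrow i, abs_nonneg (Bs p i i)]
    _ ≤ ‖μ - Bs p i i‖ := by simpa using norm_sub_norm_le μ (Bs p i i : ℂ)
    _ = ‖splittingPencil Bs μ (p, i) (p, i)‖ := by rw [hdiag]

theorem iterMat_map_ofReal :
    (iterMat Bs).map Complex.ofReal =
      ((1 - blockL Bs).map Complex.ofReal)⁻¹ * (blockU Bs).map Complex.ofReal :=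
  (Matrix.map_mul (f := Complex.ofRealHom)).trans <| by
    rw [Matrix.map_nonsing_inv Complex.ofRealHom]; rfl

theorem norm_lt_one_of_mem_spectrum_iterMat
    (hrow : ∀ i, ∑ qj : Fin d × Fin n, |Bs qj.1 i qj.2| < 1) {μ : ℂ}
    (hμ : μ ∈ spectrum ℂ ((iterMat Bs).map Complex.ofReal)) : ‖μ‖ < 1 := by
  have hdet : ((1 - blockL Bs).map Complex.ofReal).det = 1 := by
    have h := (Complex.ofRealHom.map_det (1 - blockL Bs)).symm
    rwa [det_one_sub_blockL, map_one] at h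
  have hunit : IsUnit ((1 - blockL Bs).map Complex.ofReal).det := hdet ▸ isUnit_one
  rw [iterMat_map_ofReal, Matrix.mem_spectrum_nonsing_inv_mul_iff hunit] at hμ
  by_contra! h
  exact det_splittingPencil_ne_zero Bs hrow h hμ

end Splitting

/-- Strict diagonal dominance by rows (`‖B_J‖_∞ < 1`) implies convergence of
every splitting method: `ρ(𝓑_{(d)}) < 1`. -/
theorem convergence_row_dominance (n d : ℕ) (BJ : Matrix (Fin n) (Fin n) ℝ)
    (Bs : Fin d → Matrix (Fin n) (Fin n) ℝ)
    (hsplit : IsSplitting BJ Bs)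
    (hdom : infNorm BJ < 1) :
    specRad (iterMat Bs) < 1 := by
  have hrow : ∀ i, ∑ qj : Fin d × Fin n, |Bs qj.1 i qj.2| < 1 := fun i =>
    (hsplit.sum_abs_row i ▸ sum_abs_le_infNorm BJ i).trans_lt hdom
  refine spectralRadius_lt_of_finite (Matrix.finite_spectrum _) one_pos fun μ hμ => ?_
  exact_mod_cast norm_lt_one_of_mem_spectrum_iterMat Bs hrow hμ
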